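/- For a real quadratically closed field R, the natural surjection from the refined pre-Bloch group RP(R) to the pre-Bloch group P(R) (obtained by taking coinvariants for the R^×-action) is an isomorphism. -/

import Mathlib

open scoped Classical

variable (F : Type) [Field F]

/-- The subgroup of squares in `F^×`. -/
def sqSubgroup : Subgroup Fˣ := MonoidHom.range (powMonoidHom 2 : Fˣ →* Fˣ)

/-- The square class group `F^×/(F^×)²`. -/
def SqClassGroup : Type := Fˣ ⧸ sqSubgroup F

instance : CommGroup (SqClassGroup F) := inferInstanceAs (CommGroup (Fˣ ⧸ sqSubgroup F))

/-- The group ring `R_F = ℤ[F^×/(F^×)²]`. -/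
abbrev GrpRing := MonoidAlgebra ℤ (SqClassGroup F)

/-- `⟨x⟩ ∈ R_F`, the square class of `x ∈ F^×` (with the junk convention `⟨0⟩ = 1`). -/
noncomputable def cls (x : F) : GrpRing F :=
  if h : x = 0 then 1
  else MonoidAlgebra.of ℤ (SqClassGroup F)
    (QuotientGroup.mk (Units.mk0 x h) : Fˣ ⧸ sqSubgroup F)

/-- The relators of the refined pre-Bloch group: `[0]`, `[1]` and the refined five-term
relators `S_{x,y}`, inside the free `R_F`-module on the set `F` of generator labels. -/
noncomputable def refinedRels : Set (F →₀ GrpRing F) :=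
  {Finsupp.single (0 : F) 1, Finsupp.single (1 : F) 1} ∪
  {z | ∃ x y : F, x ≠ 0 ∧ x ≠ 1 ∧ y ≠ 0 ∧ y ≠ 1 ∧ x ≠ y ∧
    z = Finsupp.single x 1 - Finsupp.single y 1
        + Finsupp.single (y / x) (cls F x)
        - Finsupp.single ((1 - x⁻¹) / (1 - y⁻¹)) (cls F (x⁻¹ - 1))
        + Finsupp.single ((1 - x) / (1 - y)) (cls F (1 - x))}

/-- The refined pre-Bloch group `RP(F)`: the `R_F`-module with generators `[x]`, `x ∈ F^×`,
subject to `[1] = 0` and the refined five-term relations `S_{x,y}`. -/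
abbrev RP := (F →₀ GrpRing F) ⧸ Submodule.span (GrpRing F) (refinedRels F)

/-- The generator `[x]` of `RP(F)`. -/
noncomputable def gen (x : F) : RP F :=
  Submodule.Quotient.mk (Finsupp.single x 1)

/-- `ψ₁(x) = [x] + ⟨-1⟩[x⁻¹]`. -/
noncomputable def psi1 (x : F) : RP F := gen F x + cls F (-1) • gen F x⁻¹

/-- `ψ₂(x) = ⟨x⁻¹-1⟩[x] + ⟨1-x⟩[x⁻¹]` for `x ≠ 1`, and `ψ₂(1) = 0`. -/
noncomputable def psi2 (x : F) : RP F :=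
  if x = 1 then 0 else cls F (x⁻¹ - 1) • gen F x + cls F (1 - x) • gen F x⁻¹


/-- The coinvariants submodule of `RP(R)`: the span of the elements `⟨x⟩m - m`,
so that `RP(R)_{R^×} = RP(R) ⧸ coinvSubmodule R` is the pre-Bloch group `P(R)`. -/
noncomputable def coinvSubmodule : Submodule (GrpRing F) (RP F) :=
  Submodule.span (GrpRing F) {z : RP F | ∃ (x : F) (m : RP F), x ≠ 0 ∧ z = cls F x • m - m}

/-! In a real quadratically closed field the square class of `t ≠ 0` is `1` or `⟨-1⟩` according
to the sign of `t`, so it suffices that `⟨-1⟩` acts trivially, i.e. that the twists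
`k(z) = (⟨-1⟩ - 1)[z]` vanish. As `⟨-1⟩ k = -k`, the twists satisfy the refined five-term
relation with each coefficient `⟨t⟩` acting as the sign of `t`. Comparing the relations at
`(x, y)` and `(x⁻¹, y⁻¹)` gives a three-term relation for `k(z) - k(z⁻¹)`: at `(-1, -u)` it
makes this odd, and at `(u, u²)` with `u < 0` it kills it on squares, so it vanishes. Comparing
the relations at `(x, 1/2)` and `(1 - x, 1/2)` gives `k(1 - x) = k(x)`; and for `x < 0` the
relation at `(x, 1 - x)` collapses to `k((x⁻¹ - 1)²) = 0`, which covers every `w > 1`. The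
symmetries `z ↦ z⁻¹` and `z ↦ 1 - z` carry every other `z` into `(1, ∞)`. -/

section SquareClasses

variable {F}

theorem cls_of_ne_zero {x : F} (hx : x ≠ 0) :
    cls F x = MonoidAlgebra.of ℤ (SqClassGroup F) (QuotientGroup.mk (Units.mk0 x hx)) :=
  dif_neg hx

theorem cls_mul {x y : F} (hx : x ≠ 0) (hy : y ≠ 0) : cls F (x * y) = cls F x * cls F y := by
  rw [cls_of_ne_zero (mul_ne_zero hx hy), cls_of_ne_zero hx, cls_of_ne_zero hy,
    Units.mk0_mul, QuotientGroup.mk_mul]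
  exact map_mul _ _ _

theorem cls_sq {a : F} (ha : a ≠ 0) : cls F (a ^ 2) = 1 := by
  have hsq : Units.mk0 (a ^ 2) (pow_ne_zero 2 ha) ∈ sqSubgroup F :=
    ⟨Units.mk0 a ha, Units.ext (by simp)⟩
  rw [cls_of_ne_zero (pow_ne_zero 2 ha), (QuotientGroup.eq_one_iff _).mpr hsq]
  exact map_one _

theorem cls_one : cls F 1 = 1 := by
  simpa using cls_sq (one_ne_zero (α := F))

theorem cls_inv {x : F} (hx : x ≠ 0) : cls F x⁻¹ = cls F x := by
  rw [show x⁻¹ = x * x⁻¹ ^ 2 by field_simp, cls_mul hx (pow_ne_zero 2 (inv_ne_zero hx)),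
    cls_sq (inv_ne_zero hx), mul_one]

theorem cls_neg {x : F} (hx : x ≠ 0) : cls F (-x) = cls F (-1) * cls F x := by
  rw [neg_eq_neg_one_mul, cls_mul (neg_ne_zero.mpr one_ne_zero) hx]

theorem cls_sub_comm {x y : F} (h : x ≠ y) : cls F (x - y) = cls F (-1) * cls F (y - x) := by
  rw [← neg_sub y x, cls_neg (sub_ne_zero.mpr h.symm)]

theorem cls_neg_one_mul_self : cls F (-1) * cls F (-1) = 1 := by
  rw [← cls_mul (neg_ne_zero.mpr one_ne_zero) (neg_ne_zero.mpr one_ne_zero), neg_one_mul,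
    neg_neg, cls_one]

end SquareClasses

section RefinedBloch

variable {F}

theorem gen_zero : gen F 0 = 0 :=
  (Submodule.Quotient.mk_eq_zero _).mpr (Submodule.subset_span (Or.inl (Or.inl rfl)))

theorem gen_one : gen F 1 = 0 :=
  (Submodule.Quotient.mk_eq_zero _).mpr (Submodule.subset_span (Or.inl (Or.inr rfl)))

theorem mk_single (a : F) (c : GrpRing F) :
    (Submodule.Quotient.mk (Finsupp.single a c) : RP F) = c • gen F a := by
  rw [gen, ← Submodule.Quotient.mk_smul, Finsupp.smul_single, smul_eq_mul, mul_one]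

theorem gen_five {x y : F} (hx0 : x ≠ 0) (hx1 : x ≠ 1) (hy0 : y ≠ 0) (hy1 : y ≠ 1)
    (hxy : x ≠ y) :
    gen F x - gen F y + cls F x • gen F (y / x)
      - cls F (x⁻¹ - 1) • gen F ((1 - x⁻¹) / (1 - y⁻¹))
      + cls F (1 - x) • gen F ((1 - x) / (1 - y)) = 0 := by
  have hrel := (Submodule.Quotient.mk_eq_zero (Submodule.span (GrpRing F) (refinedRels F))).mpr
    (Submodule.subset_span (Or.inr ⟨x, y, hx0, hx1, hy0, hy1, hxy, rfl⟩))
  simpa only [Submodule.Quotient.mk_add, Submodule.Quotient.mk_sub, mk_single, one_smul]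
    using hrel

variable (F) in
noncomputable def twist (z : F) : RP F := (cls F (-1) - 1) • gen F z

theorem twist_zero : twist F 0 = 0 := by
  rw [twist, gen_zero, smul_zero]

theorem twist_one : twist F 1 = 0 := by
  rw [twist, gen_one, smul_zero]

theorem cls_neg_one_smul_twist (z : F) : cls F (-1) • twist F z = -twist F z := by
  rw [twist, smul_smul, mul_sub, cls_neg_one_mul_self, mul_one, ← neg_sub, neg_smul]

theorem twist_five {x y : F} (hx0 : x ≠ 0) (hx1 : x ≠ 1) (hy0 : y ≠ 0) (hy1 : y ≠ 1)
    (hxy : x ≠ y) :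
    twist F x - twist F y + cls F x • twist F (y / x)
      - cls F (x⁻¹ - 1) • twist F ((1 - x⁻¹) / (1 - y⁻¹))
      + cls F (1 - x) • twist F ((1 - x) / (1 - y)) = 0 := by
  simp only [twist]
  linear_combination (norm := module) (cls F (-1) - 1) • gen_five hx0 hx1 hy0 hy1 hxy

variable (F) in
noncomputable def twistInvDiff (z : F) : RP F := twist F z - twist F z⁻¹

theorem cls_neg_one_smul_twistInvDiff (z : F) :
    cls F (-1) • twistInvDiff F z = -twistInvDiff F z := by
  rw [twistInvDiff, smul_sub, cls_neg_one_smul_twist, cls_neg_one_smul_twist, neg_sub_neg,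
    neg_sub]

theorem twistInvDiff_neg_one : twistInvDiff F (-1) = 0 := by
  rw [twistInvDiff, inv_neg, inv_one, sub_self]

theorem twistInvDiff_five {x y : F} (hx0 : x ≠ 0) (hx1 : x ≠ 1) (hy0 : y ≠ 0) (hy1 : y ≠ 1)
    (hxy : x ≠ y) :
    twistInvDiff F x - twistInvDiff F y + cls F x • twistInvDiff F (y / x) = 0 := by
  have h := twist_five hx0 hx1 hy0 hy1 hxy
  have hinv := twist_five (inv_ne_zero hx0) (inv_ne_one.mpr hx1) (inv_ne_zero hy0)
    (inv_ne_one.mpr hy1) (inv_injective.ne hxy)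
  rw [inv_inv, inv_inv, inv_div_inv, cls_inv hx0, cls_sub_comm hx1,
    cls_sub_comm (inv_ne_one.mpr hx1).symm] at hinv
  rw [twistInvDiff, twistInvDiff, twistInvDiff, inv_div]
  linear_combination (norm := module) h - hinv
    - cls F (1 - x) • cls_neg_one_smul_twist ((1 - x) / (1 - y))
    + cls F (x⁻¹ - 1) • cls_neg_one_smul_twist ((1 - x⁻¹) / (1 - y⁻¹))

end RefinedBloch

theorem cls_of_pos {R : Type} [Field R] [LinearOrder R]
    (hR : ∀ x : R, 0 < x → ∃ a : R, a ^ 2 = x) {x : R} (hx : 0 < x) : cls R x = 1 := by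
  obtain ⟨a, rfl⟩ := hR x hx
  exact cls_sq (by rintro rfl; simp at hx)

section RealQuadraticallyClosed

variable {R : Type} [Field R] [LinearOrder R] [IsStrictOrderedRing R]

theorem cls_of_neg (hR : ∀ x : R, 0 < x → ∃ a : R, a ^ 2 = x) {x : R} (hx : x < 0) :
    cls R x = cls R (-1) := by
  rw [← neg_neg x, cls_neg (neg_ne_zero.mpr hx.ne), cls_of_pos hR (neg_pos.mpr hx), mul_one]

theorem exists_neg_mul_self_eq (hR : ∀ x : R, 0 < x → ∃ a : R, a ^ 2 = x) {w : R}
    (hw : 0 < w) : ∃ b < 0, b * b = w := by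
  obtain ⟨a, rfl⟩ := hR w hw
  have ha : a ≠ 0 := by rintro rfl; simp at hw
  exact ⟨-|a|, neg_neg_iff_pos.mpr (abs_pos.mpr ha), by rw [neg_mul_neg, abs_mul_abs_self, sq]⟩

theorem twistInvDiff_neg {u : R} (hu0 : u ≠ 0) (hu1 : u ≠ 1) (hu1' : u ≠ -1) :
    twistInvDiff R (-u) = -twistInvDiff R u := by
  have h := twistInvDiff_five (x := -1) (y := -u) (by norm_num) (by norm_num)
    (neg_ne_zero.mpr hu0) (fun h => hu1' (neg_eq_iff_eq_neg.mp h))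
    (fun h => hu1 (neg_injective h).symm)
  rw [neg_div_neg_eq, div_one, twistInvDiff_neg_one, cls_neg_one_smul_twistInvDiff] at h
  linear_combination (norm := module) -h

theorem twistInvDiff_mul_self (hR : ∀ x : R, 0 < x → ∃ a : R, a ^ 2 = x) {u : R} (hu : u < 0)
    (hu1 : u ≠ -1) : twistInvDiff R (u * u) = 0 := by
  have huu : 0 < u * u := mul_pos_of_neg_of_neg hu hu
  have huu1 : u * u ≠ 1 := fun h => (mul_self_eq_one_iff.mp h).elim (fun h => by linarith) hu1
  have h := twistInvDiff_five hu.ne (by linarith) huu.ne' huu1 (by linarith)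
  rw [mul_div_cancel_right₀ u hu.ne, cls_of_neg hR hu, cls_neg_one_smul_twistInvDiff] at h
  linear_combination (norm := module) -h

theorem twistInvDiff_eq_zero (hR : ∀ x : R, 0 < x → ∃ a : R, a ^ 2 = x) (z : R) :
    twistInvDiff R z = 0 := by
  have hpos : ∀ w : R, 0 < w → w ≠ 1 → twistInvDiff R w = 0 := by
    intro w hw hw1
    obtain ⟨u, hu, rfl⟩ := exists_neg_mul_self_eq hR hw
    exact twistInvDiff_mul_self hR hu (by rintro rfl; norm_num at hw1)
  rcases lt_trichotomy z 0 with hz | rfl | hz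
  · rcases eq_or_ne z (-1) with rfl | hz1
    · exact twistInvDiff_neg_one
    rw [← neg_neg z, twistInvDiff_neg (by linarith) (fun h => hz1 (by linarith)) (by linarith),
      hpos (-z) (by linarith) (fun h => hz1 (by linarith)), neg_zero]
  · rw [twistInvDiff, inv_zero, sub_self]
  · rcases eq_or_ne z 1 with rfl | hz1
    · rw [twistInvDiff, inv_one, sub_self]
    exact hpos z hz hz1

theorem twist_inv (hR : ∀ x : R, 0 < x → ∃ a : R, a ^ 2 = x) (z : R) :
    twist R z⁻¹ = twist R z :=
  (sub_eq_zero.mp (twistInvDiff_eq_zero hR z)).symm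

theorem twist_one_sub (hR : ∀ x : R, 0 < x → ∃ a : R, a ^ 2 = x) (x : R) :
    twist R (1 - x) = twist R x := by
  rcases eq_or_ne x 0 with rfl | hx0
  · rw [sub_zero, twist_one, twist_zero]
  rcases eq_or_ne x 1 with rfl | hx1
  · rw [sub_self, twist_one, twist_zero]
  rcases eq_or_ne x 2⁻¹ with rfl | hx2
  · norm_num
  have h1x : 1 - x ≠ 0 := sub_ne_zero.mpr (Ne.symm hx1)
  have hx1' : x⁻¹ - 1 ≠ 0 := sub_ne_zero.mpr (inv_ne_one.mpr hx1)
  have h := twist_five hx0 hx1 (y := 2⁻¹) (by norm_num) (by norm_num) hx2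
  have h' := twist_five h1x (by contrapose! hx0; linarith) (y := 2⁻¹) (by norm_num) (by norm_num)
    (by contrapose! hx2; linarith)
  have e : (1 - x)⁻¹ - 1 = (x⁻¹ - 1)⁻¹ := by field_simp; ring
  rw [show (2⁻¹ : R) / x = (2 * x)⁻¹ by field_simp, twist_inv hR (2 * x),
    show (1 - x⁻¹) / (1 - 2⁻¹⁻¹) = x⁻¹ - 1 by norm_num; ring,
    show (1 - x) / (1 - 2⁻¹) = 2 * (1 - x) by field_simp; ring] at h
  rw [show (2⁻¹ : R) / (1 - x) = (2 * (1 - x))⁻¹ by field_simp,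
    twist_inv hR (2 * (1 - x)),
    show (1 - (1 - x)⁻¹) / (1 - 2⁻¹⁻¹) = (1 - x)⁻¹ - 1 by norm_num; ring, e,
    twist_inv hR (x⁻¹ - 1),
    cls_inv hx1', sub_sub_cancel, show x / (1 - 2⁻¹) = 2 * x by field_simp; ring] at h'
  linear_combination (norm := module) h' - h

theorem twist_inv_sub_one_sq (hR : ∀ x : R, 0 < x → ∃ a : R, a ^ 2 = x) {x : R} (hx : x < 0) :
    twist R ((x⁻¹ - 1) ^ 2) = 0 := by
  have hx0 : x ≠ 0 := hx.ne
  have h1x : 0 < 1 - x := by linarith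
  have h1x0 : 1 - x ≠ 0 := h1x.ne'
  have hb : x⁻¹ - 1 < 0 := by linarith [inv_lt_zero.mpr hx]
  have h := twist_five hx0 (by linarith) h1x0 (fun h => by linarith) (by linarith)
  rw [sub_sub_cancel, show (1 - x) / x = x⁻¹ - 1 by field_simp,
    show (1 - x⁻¹) / (1 - (1 - x)⁻¹) = (x⁻¹ - 1) ^ 2 by
      rw [show 1 - (1 - x)⁻¹ = -x / (1 - x) by field_simp; ring]; field_simp; ring,
    cls_of_neg hR hx, cls_of_neg hR hb, cls_of_pos hR h1x, one_smul,
    cls_neg_one_smul_twist, cls_neg_one_smul_twist, twist_one_sub hR x] at h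
  linear_combination (norm := module) h

theorem twist_of_one_lt (hR : ∀ x : R, 0 < x → ∃ a : R, a ^ 2 = x) {w : R} (hw : 1 < w) :
    twist R w = 0 := by
  obtain ⟨b, hb, rfl⟩ := exists_neg_mul_self_eq hR (zero_lt_one.trans hw)
  have hb1 : b + 1 < 0 := by nlinarith
  simpa only [inv_inv, add_sub_cancel_right, sq] using
    twist_inv_sub_one_sq hR (inv_lt_zero.mpr hb1)

theorem twist_eq_zero (hR : ∀ x : R, 0 < x → ∃ a : R, a ^ 2 = x) (z : R) : twist R z = 0 := by
  rcases lt_trichotomy z 0 with hz | rfl | hz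
  · rw [← twist_one_sub hR]
    exact twist_of_one_lt hR (by linarith)
  · exact twist_zero
  rcases lt_trichotomy z 1 with hz1 | rfl | hz1
  · rw [← twist_inv hR]
    exact twist_of_one_lt hR ((one_lt_inv₀ hz).mpr hz1)
  · exact twist_one
  · exact twist_of_one_lt hR hz1

theorem cls_neg_one_smul_gen (hR : ∀ x : R, 0 < x → ∃ a : R, a ^ 2 = x) (a : R) :
    cls R (-1) • gen R a = gen R a := by
  have h := twist_eq_zero hR a
  rwa [twist, sub_smul, one_smul, sub_eq_zero] at h

theorem cls_neg_one_smul (hR : ∀ x : R, 0 < x → ∃ a : R, a ^ 2 = x) (m : RP R) :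
    cls R (-1) • m = m := by
  obtain ⟨f, rfl⟩ := Submodule.Quotient.mk_surjective _ m
  induction f using Finsupp.induction_linear with
  | zero => rw [Submodule.Quotient.mk_zero, smul_zero]
  | add f g hf hg => rw [Submodule.Quotient.mk_add, smul_add, hf, hg]
  | single a c => rw [mk_single, smul_comm, cls_neg_one_smul_gen hR]

theorem cls_smul (hR : ∀ x : R, 0 < x → ∃ a : R, a ^ 2 = x) {x : R} (hx : x ≠ 0) (m : RP R) :
    cls R x • m = m := by
  rcases hx.lt_or_gt with hx | hx
  · rw [cls_of_neg hR hx, cls_neg_one_smul hR]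
  · rw [cls_of_pos hR hx, one_smul]

theorem coinvSubmodule_eq_bot (hR : ∀ x : R, 0 < x → ∃ a : R, a ^ 2 = x) :
    coinvSubmodule R = ⊥ := by
  rw [eq_bot_iff, coinvSubmodule, Submodule.span_le]
  rintro _ ⟨x, m, hx, rfl⟩
  rw [SetLike.mem_coe, Submodule.mem_bot, cls_smul hR hx, sub_self]

end RealQuadraticallyClosed

/-- For a real quadratically closed field `R`, the natural surjection from the refined
pre-Bloch group `RP(R)` onto the pre-Bloch group `P(R) = RP(R)_{R^×}` (the coinvariants
for the `R^×`-action) is an isomorphism, i.e. the quotient map is bijective. -/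
theorem RP_to_preBloch_bijective (R : Type) [Field R] [LinearOrder R] [IsStrictOrderedRing R]
    (hRQC : ∀ x : R, 0 < x → ∃ a : R, a ^ 2 = x) :
    Function.Bijective (Submodule.mkQ (coinvSubmodule R)) := by
  have hker : LinearMap.ker (coinvSubmodule R).mkQ = ⊥ := by
    rw [Submodule.ker_mkQ, coinvSubmodule_eq_bot hRQC]
  exact ⟨LinearMap.ker_eq_bot.mp hker, Submodule.mkQ_surjective _⟩
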